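/- arXiv:2107.06379 — 2 statements merged into one kernel-verified Lean document; each statement's English description precedes it below -/
import Mathlib

section
/- The value function of a partially observed Markov decision process is concave in the belief state: if V_T(π) = ∫ c_T(x) dπ(x) and V_t(π) = inf_u [ ∫ c_t(x,u) dπ(x) + E[V_{t+1}(φ_t(π, Y_{t+1}, u))] ] where the belief update φ_t is given by the Bayes operator, then each V_t is a concave function of π on the simplex of probability distributions (finite state and observation spaces). -/
open Finset

/-- Predicted observation probability `σ(π, u, y) = Σ_{x'} Q(y|x') Σ_x P(x'|x,u) π(x)`. -/
def pomdpPredObs {S O A : Type*} [Fintype S]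
    (trans : A → S → S → ℝ) (obs : S → O → ℝ) (π : S → ℝ) (u : A) (y : O) : ℝ :=
  ∑ x' : S, obs x' y * ∑ x : S, trans u x x' * π x

/-- Bayes belief update `φ(π, u, y)(x') = Q(y|x') Σ_x P(x'|x,u) π(x) / σ(π, u, y)`. -/
noncomputable def pomdpBayesUpdate {S O A : Type*} [Fintype S]
    (trans : A → S → S → ℝ) (obs : S → O → ℝ) (π : S → ℝ) (u : A) (y : O) : S → ℝ :=
  fun x' => obs x' y * (∑ x : S, trans u x x' * π x) / pomdpPredObs trans obs π u y

/-- Value functions of a finite POMDP by the backward Bellman recursion on beliefs, indexed by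
the number `n` of steps to go: `V 0 π = ⟨c_T, π⟩` and
`V (n+1) π = min_u [⟨c n (·,u), π⟩ + Σ_y σ(π,u,y) V n (φ(π,u,y))]`. -/
noncomputable def pomdpValue {S O A : Type*} [Fintype S] [Fintype O] [Fintype A] [Nonempty A]
    (trans : A → S → S → ℝ) (obs : S → O → ℝ)
    (c : ℕ → S → A → ℝ) (cT : S → ℝ) : ℕ → (S → ℝ) → ℝ
  | 0, π => ∑ x : S, cT x * π x
  | n + 1, π =>
      (Finset.univ.inf' Finset.univ_nonempty fun u : A =>
        (∑ x : S, c n x u * π x) +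
          ∑ y : O, pomdpPredObs trans obs π u y *
            pomdpValue trans obs c cT n (pomdpBayesUpdate trans obs π u y))

section Aux

variable {S O A : Type*} [Fintype S] (trans : A → S → S → ℝ) (obs : S → O → ℝ)

lemma pomdpPredObs_nonneg (htn : ∀ u x x', 0 ≤ trans u x x') (hon : ∀ x y, 0 ≤ obs x y)
    {π : S → ℝ} (hπ : ∀ x, 0 ≤ π x) (u : A) (y : O) :
    0 ≤ pomdpPredObs trans obs π u y :=
  Finset.sum_nonneg fun x' _ => mul_nonneg (hon x' y)
    (Finset.sum_nonneg fun x _ => mul_nonneg (htn u x x') (hπ x))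

lemma pomdp_inner_mix (π π' : S → ℝ) (l : ℝ) (u : A) (x' : S) :
    (∑ x, trans u x x' * (l * π x + (1 - l) * π' x)) =
      l * (∑ x, trans u x x' * π x) + (1 - l) * (∑ x, trans u x x' * π' x) := by
  rw [Finset.mul_sum, Finset.mul_sum, ← Finset.sum_add_distrib]
  exact Finset.sum_congr rfl fun x _ => by ring

lemma pomdpPredObs_mix (π π' : S → ℝ) (l : ℝ) (u : A) (y : O) :
    pomdpPredObs trans obs (fun x => l * π x + (1 - l) * π' x) u y =
      l * pomdpPredObs trans obs π u y + (1 - l) * pomdpPredObs trans obs π' u y := by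
  unfold pomdpPredObs
  rw [Finset.mul_sum, Finset.mul_sum, ← Finset.sum_add_distrib]
  exact Finset.sum_congr rfl fun x' _ => by rw [pomdp_inner_mix]; ring

lemma pomdpBayesUpdate_mem (htn : ∀ u x x', 0 ≤ trans u x x') (hon : ∀ x y, 0 ≤ obs x y)
    {π : S → ℝ} (hπ : π ∈ stdSimplex ℝ S) (u : A) (y : O)
    (hs : 0 < pomdpPredObs trans obs π u y) :
    pomdpBayesUpdate trans obs π u y ∈ stdSimplex ℝ S := by
  constructor
  · intro x'
    exact div_nonneg (mul_nonneg (hon _ _)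
      (Finset.sum_nonneg fun x _ => mul_nonneg (htn u x x') (hπ.1 x))) hs.le
  · show (∑ x' : S, obs x' y * (∑ x : S, trans u x x' * π x) / pomdpPredObs trans obs π u y) = 1
    rw [← Finset.sum_div]
    exact div_self hs.ne'

/-- Key perspective-function concavity step: if `V` is concave on the simplex, then
`π ↦ σ(π,u,y) * V(φ(π,u,y))` is concave on the simplex. -/
lemma pomdp_F_concave (htn : ∀ u x x', 0 ≤ trans u x x') (hon : ∀ x y, 0 ≤ obs x y)
    (V : (S → ℝ) → ℝ)
    (hV : ∀ p ∈ stdSimplex ℝ S, ∀ p' ∈ stdSimplex ℝ S, ∀ a : ℝ, 0 ≤ a → a ≤ 1 →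
      a * V p + (1 - a) * V p' ≤ V (fun x => a * p x + (1 - a) * p' x))
    {π π' : S → ℝ} (hπ : π ∈ stdSimplex ℝ S) (hπ' : π' ∈ stdSimplex ℝ S)
    {l : ℝ} (hl : 0 ≤ l) (hl1 : l ≤ 1) (u : A) (y : O) :
    l * (pomdpPredObs trans obs π u y * V (pomdpBayesUpdate trans obs π u y)) +
      (1 - l) * (pomdpPredObs trans obs π' u y * V (pomdpBayesUpdate trans obs π' u y)) ≤
    pomdpPredObs trans obs (fun x => l * π x + (1 - l) * π' x) u y *
      V (pomdpBayesUpdate trans obs (fun x => l * π x + (1 - l) * π' x) u y) := by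
  set s := pomdpPredObs trans obs π u y with hsdef
  set s' := pomdpPredObs trans obs π' u y with hs'def
  have hs0 : 0 ≤ s := pomdpPredObs_nonneg trans obs htn hon hπ.1 u y
  have hs'0 : 0 ≤ s' := pomdpPredObs_nonneg trans obs htn hon hπ'.1 u y
  have hmix : pomdpPredObs trans obs (fun x => l * π x + (1 - l) * π' x) u y
      = l * s + (1 - l) * s' := pomdpPredObs_mix trans obs π π' l u y
  have hls0 : 0 ≤ l * s := mul_nonneg hl hs0
  have h1ls0 : 0 ≤ (1 - l) * s' := mul_nonneg (by linarith) hs'0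
  rw [hmix]
  -- numerator vanishing lemma
  have hnumzero : ∀ (a : ℝ) (σ : S → ℝ), 0 ≤ a → (∀ x, 0 ≤ σ x) →
      a * pomdpPredObs trans obs σ u y = 0 →
      ∀ x', a * (obs x' y * ∑ x, trans u x x' * σ x) = 0 := by
    intro a σ ha hσ h x'
    rcases mul_eq_zero.mp h with h | h
    · rw [h, zero_mul]
    · have : obs x' y * ∑ x, trans u x x' * σ x = 0 := by
        have hnn : ∀ z ∈ Finset.univ, (0:ℝ) ≤ obs z y * ∑ x, trans u x z * σ x :=
          fun z _ => mul_nonneg (hon z y)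
            (Finset.sum_nonneg fun x _ => mul_nonneg (htn u x z) (hσ x))
        exact (Finset.sum_eq_zero_iff_of_nonneg hnn).mp h x' (Finset.mem_univ x')
      rw [this, mul_zero]
  rcases eq_or_lt_of_le (by linarith : (0:ℝ) ≤ l * s + (1 - l) * s') with hm | hm
  · -- both weighted masses vanish
    have e1 : l * s = 0 := by linarith
    have e2 : (1 - l) * s' = 0 := by linarith
    have : l * (s * V (pomdpBayesUpdate trans obs π u y)) +
        (1 - l) * (s' * V (pomdpBayesUpdate trans obs π' u y)) = 0 := by
      rw [show l * (s * V (pomdpBayesUpdate trans obs π u y)) =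
        (l * s) * V (pomdpBayesUpdate trans obs π u y) by ring, e1,
        show (1 - l) * (s' * V (pomdpBayesUpdate trans obs π' u y)) =
        ((1 - l) * s') * V (pomdpBayesUpdate trans obs π' u y) by ring, e2]
      ring
    rw [this, ← hm]
    simp
  · by_cases hls : l * s = 0
    · -- the π-side mass vanishes: the mixed update equals the π'-update
      have hm' : (0:ℝ) < (1 - l) * s' := by linarith
      have h1l : (1 - l) ≠ 0 := by
        intro h; rw [h, zero_mul] at hm'; exact lt_irrefl _ hm'
      have hφ : pomdpBayesUpdate trans obs (fun x => l * π x + (1 - l) * π' x) u y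
          = pomdpBayesUpdate trans obs π' u y := by
        funext x'
        show obs x' y * (∑ x, trans u x x' * (l * π x + (1 - l) * π' x)) /
            pomdpPredObs trans obs (fun x => l * π x + (1 - l) * π' x) u y
          = obs x' y * (∑ x, trans u x x' * π' x) / s'
        rw [hmix, pomdp_inner_mix, hls, zero_add]
        have hz := hnumzero l π hl hπ.1 hls x'
        rw [show obs x' y * (l * (∑ x, trans u x x' * π x) + (1 - l) * (∑ x, trans u x x' * π' x))
            = l * (obs x' y * ∑ x, trans u x x' * π x)
              + (1 - l) * (obs x' y * ∑ x, trans u x x' * π' x) by ring, hz, zero_add]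
        rw [mul_div_mul_left _ _ h1l]
      rw [hφ, hls, zero_add]
      have : l * (s * V (pomdpBayesUpdate trans obs π u y)) = 0 := by
        rw [show l * (s * V (pomdpBayesUpdate trans obs π u y)) =
          (l * s) * V (pomdpBayesUpdate trans obs π u y) by ring, hls, zero_mul]
      rw [this, zero_add]
      apply le_of_eq; ring
    · by_cases h1ls : (1 - l) * s' = 0
      · -- the π'-side mass vanishes: the mixed update equals the π-update
        have hm' : (0:ℝ) < l * s := by linarith
        have hlne : l ≠ 0 := by
          intro h; rw [h, zero_mul] at hm'; exact lt_irrefl _ hm'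
        have hφ : pomdpBayesUpdate trans obs (fun x => l * π x + (1 - l) * π' x) u y
            = pomdpBayesUpdate trans obs π u y := by
          funext x'
          show obs x' y * (∑ x, trans u x x' * (l * π x + (1 - l) * π' x)) /
              pomdpPredObs trans obs (fun x => l * π x + (1 - l) * π' x) u y
            = obs x' y * (∑ x, trans u x x' * π x) / s
          rw [hmix, pomdp_inner_mix, h1ls, add_zero]
          have hz := hnumzero (1 - l) π' (by linarith) hπ'.1 h1ls x'
          rw [show obs x' y * (l * (∑ x, trans u x x' * π x) + (1 - l) * (∑ x, trans u x x' * π' x))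
              = l * (obs x' y * ∑ x, trans u x x' * π x)
                + (1 - l) * (obs x' y * ∑ x, trans u x x' * π' x) by ring, hz, add_zero]
          rw [mul_div_mul_left _ _ hlne]
        rw [hφ, h1ls, add_zero]
        have : (1 - l) * (s' * V (pomdpBayesUpdate trans obs π' u y)) = 0 := by
          rw [show (1 - l) * (s' * V (pomdpBayesUpdate trans obs π' u y)) =
            ((1 - l) * s') * V (pomdpBayesUpdate trans obs π' u y) by ring, h1ls, zero_mul]
        rw [this, add_zero]
        apply le_of_eq; ring
      · -- both masses positive: genuine convex combination
        have hls' : 0 < l * s := lt_of_le_of_ne hls0 (Ne.symm hls)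
        have h1ls' : 0 < (1 - l) * s' := lt_of_le_of_ne h1ls0 (Ne.symm h1ls)
        have hspos : 0 < s := hs0.lt_of_ne (fun h => hls (by rw [← h, mul_zero]))
        have hs'pos : 0 < s' := hs'0.lt_of_ne (fun h => h1ls (by rw [← h, mul_zero]))
        have hmpos : (0:ℝ) < l * s + (1 - l) * s' := by linarith
        set a : ℝ := l * s / (l * s + (1 - l) * s') with hadef
        have ha : 0 ≤ a := div_nonneg hls0 hmpos.le
        have ha1 : a ≤ 1 := (div_le_one hmpos).mpr (by linarith)
        have hmemπ := pomdpBayesUpdate_mem trans obs htn hon hπ u y hspos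
        have hmemπ' := pomdpBayesUpdate_mem trans obs htn hon hπ' u y hs'pos
        have hφmix : pomdpBayesUpdate trans obs (fun x => l * π x + (1 - l) * π' x) u y
            = fun x' => a * pomdpBayesUpdate trans obs π u y x'
                + (1 - a) * pomdpBayesUpdate trans obs π' u y x' := by
          funext x'
          show obs x' y * (∑ x, trans u x x' * (l * π x + (1 - l) * π' x)) /
              pomdpPredObs trans obs (fun x => l * π x + (1 - l) * π' x) u y
            = a * (obs x' y * (∑ x, trans u x x' * π x) / s)
              + (1 - a) * (obs x' y * (∑ x, trans u x x' * π' x) / s')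
          rw [hmix, pomdp_inner_mix, hadef]
          field_simp
          ring
        have hVc := hV _ hmemπ _ hmemπ' a ha ha1
        rw [hφmix]
        calc l * (s * V (pomdpBayesUpdate trans obs π u y)) +
              (1 - l) * (s' * V (pomdpBayesUpdate trans obs π' u y))
            = (l * s + (1 - l) * s') * (a * V (pomdpBayesUpdate trans obs π u y)
                + (1 - a) * V (pomdpBayesUpdate trans obs π' u y)) := by
              rw [hadef]; field_simp; ring
          _ ≤ (l * s + (1 - l) * s') *
              V (fun x' => a * pomdpBayesUpdate trans obs π u y x'
                + (1 - a) * pomdpBayesUpdate trans obs π' u y x') :=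
              mul_le_mul_of_nonneg_left hVc hmpos.le

end Aux

/-- Sondik's concavity result (Proposition 1 of the paper): the value function of a
finite-state, finite-observation, finite-action POMDP defined by the backward Bellman
recursion on beliefs is concave in the belief state:
`V_t(λπ + (1−λ)π') ≥ λV_t(π) + (1−λ)V_t(π')` for beliefs `π, π'` and `λ ∈ [0,1]`. -/
theorem pomdpValue_concave
    {S O A : Type*} [Fintype S] [Fintype O] [Fintype A] [Nonempty A]
    (trans : A → S → S → ℝ) (obs : S → O → ℝ)
    (c : ℕ → S → A → ℝ) (cT : S → ℝ)
    (htrans_nonneg : ∀ u x x', 0 ≤ trans u x x')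
    (htrans_sum : ∀ u x, ∑ x' : S, trans u x x' = 1)
    (hobs_nonneg : ∀ x y, 0 ≤ obs x y)
    (hobs_sum : ∀ x, ∑ y : O, obs x y = 1) :
    ∀ n : ℕ, ∀ π ∈ stdSimplex ℝ S, ∀ π' ∈ stdSimplex ℝ S, ∀ l : ℝ, 0 ≤ l → l ≤ 1 →
      l * pomdpValue trans obs c cT n π + (1 - l) * pomdpValue trans obs c cT n π' ≤
        pomdpValue trans obs c cT n (fun x => l * π x + (1 - l) * π' x) := by
  intro n
  induction n with
  | zero =>
    intro π hπ π' hπ' l hl hl1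
    simp only [pomdpValue]
    apply le_of_eq
    rw [Finset.mul_sum, Finset.mul_sum, ← Finset.sum_add_distrib]
    exact Finset.sum_congr rfl fun x _ => by ring
  | succ n ih =>
    intro π hπ π' hπ' l hl hl1
    simp only [pomdpValue]
    apply Finset.le_inf'
    intro u _
    have h1 : (Finset.univ.inf' Finset.univ_nonempty fun u : A =>
        (∑ x : S, c n x u * π x) +
          ∑ y : O, pomdpPredObs trans obs π u y *
            pomdpValue trans obs c cT n (pomdpBayesUpdate trans obs π u y)) ≤
        (∑ x : S, c n x u * π x) +
          ∑ y : O, pomdpPredObs trans obs π u y *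
            pomdpValue trans obs c cT n (pomdpBayesUpdate trans obs π u y) :=
      Finset.inf'_le _ (Finset.mem_univ u)
    have h2 : (Finset.univ.inf' Finset.univ_nonempty fun u : A =>
        (∑ x : S, c n x u * π' x) +
          ∑ y : O, pomdpPredObs trans obs π' u y *
            pomdpValue trans obs c cT n (pomdpBayesUpdate trans obs π' u y)) ≤
        (∑ x : S, c n x u * π' x) +
          ∑ y : O, pomdpPredObs trans obs π' u y *
            pomdpValue trans obs c cT n (pomdpBayesUpdate trans obs π' u y) :=
      Finset.inf'_le _ (Finset.mem_univ u)
    have hc : (∑ x : S, c n x u * (l * π x + (1 - l) * π' x))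
        = l * (∑ x : S, c n x u * π x) + (1 - l) * (∑ x : S, c n x u * π' x) := by
      rw [Finset.mul_sum, Finset.mul_sum, ← Finset.sum_add_distrib]
      exact Finset.sum_congr rfl fun x _ => by ring
    have hF : l * (∑ y : O, pomdpPredObs trans obs π u y *
            pomdpValue trans obs c cT n (pomdpBayesUpdate trans obs π u y)) +
        (1 - l) * (∑ y : O, pomdpPredObs trans obs π' u y *
            pomdpValue trans obs c cT n (pomdpBayesUpdate trans obs π' u y)) ≤
        ∑ y : O, pomdpPredObs trans obs (fun x => l * π x + (1 - l) * π' x) u y *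
            pomdpValue trans obs c cT n
              (pomdpBayesUpdate trans obs (fun x => l * π x + (1 - l) * π' x) u y) := by
      rw [Finset.mul_sum, Finset.mul_sum, ← Finset.sum_add_distrib]
      exact Finset.sum_le_sum fun y _ =>
        pomdp_F_concave trans obs htrans_nonneg hobs_nonneg
          (pomdpValue trans obs c cT n) ih hπ hπ' hl hl1 u y
    have hmul1 := mul_le_mul_of_nonneg_left h1 hl
    have hmul2 := mul_le_mul_of_nonneg_left h2 (by linarith : (0:ℝ) ≤ 1 - l)
    rw [hc]
    nlinarith [hF, hmul1, hmul2]
end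

section
/- The finite-horizon POMDP value function is piecewise linear and concave: for a finite-state, finite-observation, finite-action POMDP, each value function V_t defined by the backward Bellman recursion on beliefs is the pointwise minimum of a finite set of linear functions of the belief vector, i.e., V_t(π) = min_{α ∈ A_t} ⟨α, π⟩ for some finite set A_t ⊂ ℝ^{|S|}. -/
open Finset

/-!
Induction on the horizon. If `V n = min_{α ∈ A_n} ⟨α, ·⟩` on the simplex, then for a nonnegative
vector `m`, `(Σ m) · V n (m / Σ m) = min_α ⟨α, m⟩`: the right side is positively homogeneous, and both
sides vanish when `m = 0`. Applied to the unnormalized Bayes update, this makes each observation term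
`σ(π,u,y) V n (φ(π,u,y))` a minimum of linear functions of `π`. A sum over observations of such minima
is the minimum over all choices `y ↦ α_y`, and adding the linear stage cost and minimizing over `u`
keeps the form, with finitely many α-vectors indexed by `(u, y ↦ α_y)`.
-/

namespace Finset

theorem sum_inf'_eq_inf'_piFinset {ι κ M : Type*} [AddCommMonoid M] [LinearOrder M]
    [IsOrderedAddMonoid M] [Fintype κ] [DecidableEq κ] (s : Finset ι) (hs : s.Nonempty)
    (f : κ → ι → M) :
    ∑ k, s.inf' hs (f k) =
      (Fintype.piFinset fun _ : κ => s).inf' (Fintype.piFinset_nonempty.2 fun _ => hs)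
        fun g => ∑ k, f k (g k) := by
  apply le_antisymm
  · exact le_inf' _ _ fun g hg => sum_le_sum fun k _ => inf'_le _ (Fintype.mem_piFinset.1 hg k)
  · choose g hg hgf using fun k => s.exists_mem_eq_inf' hs (f k)
    exact inf'_le_of_le _ (Fintype.mem_piFinset.2 hg) (sum_congr rfl fun k _ => hgf k).ge

end Finset

theorem sum_mul_apply_div_sum_eq_inf' {S : Type*} [Fintype S] {V : (S → ℝ) → ℝ}
    (As : Finset (S → ℝ)) (hne : As.Nonempty)
    (hV : ∀ π ∈ stdSimplex ℝ S, V π = As.inf' hne fun α => ∑ x, α x * π x)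
    {m : S → ℝ} (hm : ∀ x, 0 ≤ m x) :
    (∑ x, m x) * V (fun x => m x / ∑ x', m x') = As.inf' hne fun α => ∑ x, α x * m x := by
  rcases (sum_nonneg fun x _ => hm x : 0 ≤ ∑ x, m x).eq_or_lt with hzero | hpos
  · -- `m = 0`, so the junk value of `V` at `m / 0` is multiplied by `0`
    have hm0 : ∀ x, m x = 0 := fun x =>
      (sum_eq_zero_iff_of_nonneg fun x _ => hm x).1 hzero.symm x (mem_univ x)
    simp [hm0]
  · have hmem : (fun x => m x / ∑ x', m x') ∈ stdSimplex ℝ S :=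
      ⟨fun x => div_nonneg (hm x) hpos.le, by simp only [← sum_div, div_self hpos.ne']⟩
    rw [hV _ hmem]
    refine (map_finset_inf' (OrderIso.mulLeft₀ _ hpos) hne _).trans
      (inf'_congr hne rfl fun α _ => ?_)
    simp only [Function.comp_apply, OrderIso.mulLeft₀_apply, mul_sum]
    exact sum_congr rfl fun x _ => by field_simp

section POMDP

variable {S O A : Type*} [Fintype S] (trans : A → S → S → ℝ) (obs : S → O → ℝ)

def pomdpUnnormalizedUpdate (π : S → ℝ) (u : A) (y : O) (x' : S) : ℝ :=
  obs x' y * ∑ x, trans u x x' * π x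

/-- The α-vector of the plan "apply `u` now, then follow the plan with α-vector `g y` after
observing `y`", where `cu` is the current stage cost of `u`. -/
def pomdpBackup [Fintype O] (cu : S → ℝ) (u : A) (g : O → S → ℝ) (x : S) : ℝ :=
  cu x + ∑ y, ∑ x', trans u x x' * obs x' y * g y x'

theorem sum_pomdpBackup_mul [Fintype O] (cu : S → ℝ) (u : A) (g : O → S → ℝ) (π : S → ℝ) :
    ∑ x, pomdpBackup trans obs cu u g x * π x =
      ∑ x, cu x * π x + ∑ y, ∑ x', g y x' * pomdpUnnormalizedUpdate trans obs π u y x' := by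
  simp only [pomdpBackup, pomdpUnnormalizedUpdate, add_mul, sum_add_distrib, sum_mul, mul_sum]
  rw [sum_comm]
  refine congrArg _ (sum_congr rfl fun y _ => ?_)
  rw [sum_comm]
  exact sum_congr rfl fun x' _ => sum_congr rfl fun x _ => by ring

variable {trans obs}

theorem pomdpPredObs_mul_apply_bayesUpdate (htrans_nonneg : ∀ u x x', 0 ≤ trans u x x')
    (hobs_nonneg : ∀ x y, 0 ≤ obs x y) {π : S → ℝ} (hπ : ∀ x, 0 ≤ π x) {V : (S → ℝ) → ℝ}
    (As : Finset (S → ℝ)) (hne : As.Nonempty)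
    (hV : ∀ π ∈ stdSimplex ℝ S, V π = As.inf' hne fun α => ∑ x, α x * π x) (u : A) (y : O) :
    pomdpPredObs trans obs π u y * V (pomdpBayesUpdate trans obs π u y) =
      As.inf' hne fun α => ∑ x', α x' * pomdpUnnormalizedUpdate trans obs π u y x' :=
  sum_mul_apply_div_sum_eq_inf' As hne hV fun x' =>
    mul_nonneg (hobs_nonneg _ _) (sum_nonneg fun x _ => mul_nonneg (htrans_nonneg _ _ _) (hπ x))

theorem bellman_eq_inf'_pomdpBackup [Fintype O] [DecidableEq O]
    (htrans_nonneg : ∀ u x x', 0 ≤ trans u x x') (hobs_nonneg : ∀ x y, 0 ≤ obs x y)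
    {π : S → ℝ} (hπ : ∀ x, 0 ≤ π x) {V : (S → ℝ) → ℝ}
    (As : Finset (S → ℝ)) (hne : As.Nonempty)
    (hV : ∀ π ∈ stdSimplex ℝ S, V π = As.inf' hne fun α => ∑ x, α x * π x)
    (cu : S → ℝ) (u : A) :
    ∑ x, cu x * π x + ∑ y, pomdpPredObs trans obs π u y * V (pomdpBayesUpdate trans obs π u y) =
      (Fintype.piFinset fun _ : O => As).inf' (Fintype.piFinset_nonempty.2 fun _ => hne)
        fun g => ∑ x, pomdpBackup trans obs cu u g x * π x := by
  simp only [pomdpPredObs_mul_apply_bayesUpdate htrans_nonneg hobs_nonneg hπ As hne hV,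
    sum_inf'_eq_inf'_piFinset, sum_pomdpBackup_mul]
  exact map_finset_inf' (OrderIso.addLeft _) _ _

end POMDP

theorem pomdpValue_piecewise_linear_concave_general
    {S O A : Type*} [Fintype S] [Fintype O] [Fintype A] [Nonempty A]
    (trans : A → S → S → ℝ) (obs : S → O → ℝ)
    (c : ℕ → S → A → ℝ) (cT : S → ℝ)
    (htrans_nonneg : ∀ u x x', 0 ≤ trans u x x')
    (hobs_nonneg : ∀ x y, 0 ≤ obs x y) :
    ∀ n : ℕ, ∃ Aset : Finset (S → ℝ), ∃ hne : Aset.Nonempty,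
      ∀ π ∈ stdSimplex ℝ S,
        pomdpValue trans obs c cT n π = Aset.inf' hne (fun α => ∑ x : S, α x * π x) := by
  classical
  intro n
  induction n with
  | zero => exact ⟨{cT}, singleton_nonempty _, fun π _ => by simp [pomdpValue]⟩
  | succ n ih =>
    obtain ⟨As, hne, hV⟩ := ih
    have hpairs := univ_nonempty (α := A).product (Fintype.piFinset_nonempty.2 fun _ : O => hne)
    let backup (p : A × (O → S → ℝ)) := pomdpBackup trans obs (c n · p.1) p.1 p.2
    refine ⟨_, hpairs.image backup, fun π hπ => ?_⟩
    rw [inf'_image, inf'_product_left, pomdpValue]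
    exact inf'_congr _ rfl fun u _ =>
      bellman_eq_inf'_pomdpBackup htrans_nonneg hobs_nonneg hπ.1 As hne hV _ u

/-- Sondik (1971), cited in Corollary 1 of the paper: the finite-horizon POMDP value function
is piecewise linear and concave; each `V_t` is the pointwise minimum of a finite set of linear
functions of the belief vector, i.e. `V_t(π) = min_{α ∈ A_t} ⟨α, π⟩` for a finite nonempty set
`A_t ⊆ ℝ^{|S|}` of α-vectors. -/
theorem pomdpValue_piecewise_linear_concave
    {S O A : Type*} [Fintype S] [Fintype O] [Fintype A] [Nonempty A] [DecidableEq (S → ℝ)]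
    (trans : A → S → S → ℝ) (obs : S → O → ℝ)
    (c : ℕ → S → A → ℝ) (cT : S → ℝ)
    (htrans_nonneg : ∀ u x x', 0 ≤ trans u x x')
    (htrans_sum : ∀ u x, ∑ x' : S, trans u x x' = 1)
    (hobs_nonneg : ∀ x y, 0 ≤ obs x y)
    (hobs_sum : ∀ x, ∑ y : O, obs x y = 1) :
    ∀ n : ℕ, ∃ Aset : Finset (S → ℝ), ∃ hne : Aset.Nonempty,
      ∀ π ∈ stdSimplex ℝ S,
        pomdpValue trans obs c cT n π = Aset.inf' hne (fun α => ∑ x : S, α x * π x) :=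
  pomdpValue_piecewise_linear_concave_general trans obs c cT htrans_nonneg hobs_nonneg
end
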